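/- For the 'reliable' arm MDP with subsidy λ for the passive action and discount γ ∈ (0,1), at the engaged state s_e the q-values satisfy Q^λ(s_e, 1) > Q^λ(s_e, 0) if and only if λ < γ(1−ε). Hence s_e is indexable with Whittle index γ(1−ε). -/
import Mathlib


/-- States of the reliable arm: start, engaged, dropout. -/
inductive RelState : Type
  | ss | se | sd
deriving DecidableEq

open RelState

/-- Next state under the active action for the reliable arm. -/
def relNext : RelState → RelState
  | ss => se
  | se => se
  | sd => sd

/-- Reward of the reliable arm: `1 − ε` in the engaged state, `0` elsewhere. -/
def relReward (ε : ℝ) : RelState → ℝ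
  | se => 1 - ε
  | _ => 0

/-- Q-value with subsidy `l` for the passive action (`a = false` passive, `a = true`
active). Passive moves every state to the dropout state `sd`. -/
def relQ (γ ε l : ℝ) (V : RelState → ℝ) (s : RelState) (a : Bool) : ℝ :=
  if a then relReward ε s + γ * V (relNext s)
  else l + relReward ε s + γ * V sd

/-- for the reliable arm MDP with subsidy `λ`, discount `γ ∈ (0,1)` and
`ε ∈ (0,1)`, at the engaged state `Q^λ(s_e, 1) > Q^λ(s_e, 0) ↔ λ < γ(1−ε)`;
hence `s_e` is indexable with Whittle index `γ(1−ε)`. -/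
theorem stmt_10 (γ ε : ℝ) (hγ : γ ∈ Set.Ioo (0 : ℝ) 1) (hε : ε ∈ Set.Ioo (0 : ℝ) 1) :
    ∀ l : ℝ, ∀ V : RelState → ℝ,
      (∀ s, V s = max (relQ γ ε l V s false) (relQ γ ε l V s true)) →
      (relQ γ ε l V se true > relQ γ ε l V se false ↔ l < γ * (1 - ε)) := by
  obtain ⟨hγ0, hγ1⟩ := hγ
  obtain ⟨hε0, hε1⟩ := hε
  intro l V hV
  have hsd := hV sd
  have hse := hV se
  simp only [relQ, relReward, relNext, Bool.false_eq_true, ite_true, ite_false] at hsd hse ⊢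
  have hγ1' : (0:ℝ) < 1 - γ := by linarith
  have hεγ : 0 < γ * (1 - ε) := mul_pos hγ0 (by linarith)
  rcases max_le_iff.mp (le_of_eq hsd.symm) with ⟨h1, h2⟩
  rcases max_le_iff.mp (le_of_eq hse.symm) with ⟨h3, h4⟩
  rcases le_max_iff.mp (le_of_eq hsd) with h5 | h5 <;>
    rcases le_max_iff.mp (le_of_eq hse) with h6 | h6
  · -- passive sd, passive se : (1-γ)Vsd = l, l ≥ 0, Vse = l+(1-ε)+γVsd
    have ed : γ * V sd - γ * (γ * V sd) = γ * l := by linear_combination γ * (le_antisymm h5 h1)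
    have ec : γ * V se = γ * l + γ * (1 - ε) + γ * (γ * V sd) := by linear_combination γ * (le_antisymm h6 h3)
    constructor <;> intro h <;> nlinarith [ed, ec]
  · -- passive sd, active se : (1-γ)Vsd = l, (1-γ)Vse = 1-ε, l ≥ 0
    have ed : γ * V sd - γ * (γ * V sd) = γ * l := by linear_combination γ * (le_antisymm h5 h1)
    have es : γ * V se - γ * (γ * V se) = γ * (1 - ε) := by linear_combination γ * (le_antisymm h6 h4)
    have hl0 : 0 ≤ l := by nlinarith [h1, h2, h5]
    constructor <;> intro h
    · nlinarith [mul_lt_mul_of_pos_left h hγ1', ed, es]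
    · nlinarith [mul_pos hγ1' (sub_pos.2 h), ed, es]
  · -- active sd, passive se : Vsd = 0, l ≤ 0, Vse = l+(1-ε)+γVsd
    have hz : V sd = 0 := by
      have h7 : (1 - γ) * V sd = 0 := by linear_combination (le_antisymm h5 h2)
      exact (mul_eq_zero.mp h7).resolve_left (by linarith)
    rw [hz] at h1 h3 h6 ⊢
    have e : V se = l + (1 - ε) + γ * 0 := le_antisymm h6 h3
    have hl0 : l ≤ 0 := by linarith
    have hgl : (1 - γ) * (-l) ≥ 0 := mul_nonneg hγ1'.le (by linarith)
    rw [e]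
    constructor <;> intro h <;> nlinarith [hεγ, hgl]
  · -- active sd, active se : Vsd = 0, l ≤ 0, (1-γ)Vse = 1-ε
    have hz : V sd = 0 := by
      have h7 : (1 - γ) * V sd = 0 := by linear_combination (le_antisymm h5 h2)
      exact (mul_eq_zero.mp h7).resolve_left (by linarith)
    rw [hz] at h1 ⊢
    have es2 : (1 - γ) * V se = 1 - ε := by linear_combination (le_antisymm h6 h4)
    have hVse : 0 < V se := by nlinarith [es2, hγ1']
    constructor <;> intro h
    · linarith
    · nlinarith [mul_pos hγ0 hVse, es2]
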